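/- arXiv:1309.0477 — 2 statements merged into one kernel-verified Lean document; each statement's English description precedes it below -/
import Mathlib

section
/- Let u, ρ > 0 be smooth functions on an open subset of ℝ × ℝⁿ satisfying the compressible Euler equations ∂u/∂t + (u·∇)u = -(1/ρ)∇p(ρ) and ∂ρ/∂t + div(ρu) = 0, where p is a smooth function of ρ. Then f = log ρ satisfies the convected wave equation f̈ = div(p′(ρ)(1/ρ)∇ρ) + Σ_{i,j} (∂uⁱ/∂xʲ)(∂uʲ/∂xⁱ), where each dot denotes the material derivative ∂/∂t + u·∇. -/
open Real MeasureTheory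

noncomputable def pdv {n : ℕ} (f : ℝ → (Fin n → ℝ) → ℝ) (i : Fin n) (t : ℝ) (x : Fin n → ℝ) : ℝ :=
  fderiv ℝ (f t) x (Pi.single i 1)

noncomputable def tdv {n : ℕ} (f : ℝ → (Fin n → ℝ) → ℝ) (t : ℝ) (x : Fin n → ℝ) : ℝ :=
  deriv (fun s => f s x) t

/-- Material derivative `∂ₜ f + Σᵢ uⁱ ∂ᵢ f`. -/
noncomputable def matD {n : ℕ} (u : ℝ → (Fin n → ℝ) → Fin n → ℝ)
    (f : ℝ → (Fin n → ℝ) → ℝ) (t : ℝ) (x : Fin n → ℝ) : ℝ :=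
  tdv f t x + ∑ i, u t x i * pdv f i t x

/-- Spatial divergence `Σᵢ ∂ᵢ uⁱ`. -/
noncomputable def divg {n : ℕ} (u : ℝ → (Fin n → ℝ) → Fin n → ℝ) (t : ℝ) (x : Fin n → ℝ) : ℝ :=
  ∑ i, pdv (fun s y => u s y i) i t x

/-! Write `D = ∂ₜ + u·∇`, which on the uncurried fields over `ℝ × ℝⁿ` is the Fréchet derivative
evaluated on the space-time vector `(1, u)`. The continuity equation reads `Dρ = -ρ div u`, so
`Df = -div u`, and Euler's equation says that the field `p'(ρ) ρ⁻¹ ∇ρ` is `-Du`. Hence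
`f̈ = -Σᵢ D(∂ᵢuⁱ)` while `div(p'(ρ) ρ⁻¹ ∇ρ) = -Σᵢ ∂ᵢ(Duⁱ)`, and the two differ by the commutator
`[∂ᵢ, D] = Σⱼ ∂ᵢuʲ ∂ⱼ` applied to `uⁱ`, which is the quadratic term. -/

open Function Filter Topology

section MaterialDerivative

variable {n : ℕ}

theorem prod_eq_smul_add_sum_single (s : ℝ) (w : Fin n → ℝ) :
    ((s, w) : ℝ × (Fin n → ℝ)) = s • (1, 0) + ∑ i, w i • ((0 : ℝ), Pi.single i (1 : ℝ)) := by
  ext j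
  · simp [Prod.fst_sum]
  · simp [Prod.snd_sum, Finset.sum_apply, Pi.single_apply]

theorem ContinuousLinearMap.apply_prod_eq (L : (ℝ × (Fin n → ℝ)) →L[ℝ] ℝ) (s : ℝ)
    (w : Fin n → ℝ) : L (s, w) = s * L (1, 0) + ∑ i, w i * L (0, Pi.single i 1) := by
  rw [prod_eq_smul_add_sum_single s w]
  simp only [map_add, map_smul, map_sum, smul_eq_mul]

variable {f g : ℝ → (Fin n → ℝ) → ℝ} {u : ℝ → (Fin n → ℝ) → Fin n → ℝ}
  {L : (ℝ × (Fin n → ℝ)) →L[ℝ] ℝ} {q : ℝ × (Fin n → ℝ)}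

theorem tdv_eq_of_hasFDerivAt (hf : HasFDerivAt (uncurry f) L q) : tdv f q.1 q.2 = L (1, 0) := by
  obtain ⟨t, x⟩ := q
  exact (hf.comp_hasDerivAt t ((hasDerivAt_id t).prodMk (hasDerivAt_const t x))).deriv

theorem pdv_eq_of_hasFDerivAt (hf : HasFDerivAt (uncurry f) L q) (i : Fin n) :
    pdv f i q.1 q.2 = L (0, Pi.single i 1) := by
  obtain ⟨t, x⟩ := q
  have h : HasFDerivAt (f t) _ x := hf.comp x ((hasFDerivAt_const t x).prodMk (hasFDerivAt_id x))
  simp [pdv, h.fderiv]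

theorem matD_eq_of_hasFDerivAt (hf : HasFDerivAt (uncurry f) L q) :
    matD u f q.1 q.2 = L (1, u q.1 q.2) := by
  rw [matD, L.apply_prod_eq, one_mul, tdv_eq_of_hasFDerivAt hf]
  simp only [pdv_eq_of_hasFDerivAt hf]

theorem tdv_congr (h : uncurry f =ᶠ[𝓝 q] uncurry g) : tdv f q.1 q.2 = tdv g q.1 q.2 := by
  obtain ⟨t, x⟩ := q
  exact (h.comp_tendsto ((continuous_id.prodMk continuous_const).tendsto' t (t, x) rfl)).deriv_eq

theorem pdv_congr (h : uncurry f =ᶠ[𝓝 q] uncurry g) (i : Fin n) :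
    pdv f i q.1 q.2 = pdv g i q.1 q.2 := by
  obtain ⟨t, x⟩ := q
  have hslice : f t =ᶠ[𝓝 x] g t :=
    h.comp_tendsto ((Continuous.prodMk_right t).tendsto' x (t, x) rfl)
  rw [pdv, pdv, hslice.fderiv_eq]

theorem matD_congr (h : uncurry f =ᶠ[𝓝 q] uncurry g) : matD u f q.1 q.2 = matD u g q.1 q.2 := by
  simp only [matD, tdv_congr h, pdv_congr h]

theorem pdv_neg (i : Fin n) (t : ℝ) (x : Fin n → ℝ) :
    pdv (fun t x => -f t x) i t x = -pdv f i t x := by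
  simp [pdv]

theorem matD_neg (t : ℝ) (x : Fin n → ℝ) : matD u (fun t x => -f t x) t x = -matD u f t x := by
  simp only [matD, tdv, pdv_neg, deriv.fun_neg, mul_neg, Finset.sum_neg_distrib, neg_add]

theorem matD_sum {ι : Type*} {s : Finset ι} {F : ι → ℝ → (Fin n → ℝ) → ℝ}
    (hF : ∀ i ∈ s, DifferentiableAt ℝ (uncurry (F i)) q) :
    matD u (fun t x => ∑ i ∈ s, F i t x) q.1 q.2 = ∑ i ∈ s, matD u (F i) q.1 q.2 := by
  rw [matD_eq_of_hasFDerivAt (HasFDerivAt.fun_sum fun i hi => (hF i hi).hasFDerivAt), sum_apply]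
  exact Finset.sum_congr rfl fun i hi => (matD_eq_of_hasFDerivAt (hF i hi).hasFDerivAt).symm

theorem pdv_comp {φ : ℝ → ℝ} (hφ : DifferentiableAt ℝ φ (f q.1 q.2))
    (hf : DifferentiableAt ℝ (uncurry f) q) (i : Fin n) :
    pdv (fun t x => φ (f t x)) i q.1 q.2 = deriv φ (f q.1 q.2) * pdv f i q.1 q.2 := by
  rw [pdv_eq_of_hasFDerivAt (f := fun t x => φ (f t x))
    (hφ.hasDerivAt.comp_hasFDerivAt q hf.hasFDerivAt), pdv_eq_of_hasFDerivAt hf.hasFDerivAt]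
  rfl

theorem matD_comp {φ : ℝ → ℝ} (hφ : DifferentiableAt ℝ φ (f q.1 q.2))
    (hf : DifferentiableAt ℝ (uncurry f) q) :
    matD u (fun t x => φ (f t x)) q.1 q.2 = deriv φ (f q.1 q.2) * matD u f q.1 q.2 := by
  rw [matD_eq_of_hasFDerivAt (f := fun t x => φ (f t x))
    (hφ.hasDerivAt.comp_hasFDerivAt q hf.hasFDerivAt), matD_eq_of_hasFDerivAt hf.hasFDerivAt]
  rfl

theorem pdv_mul (hf : DifferentiableAt ℝ (uncurry f) q) (hg : DifferentiableAt ℝ (uncurry g) q)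
    (i : Fin n) : pdv (fun t x => f t x * g t x) i q.1 q.2 =
      f q.1 q.2 * pdv g i q.1 q.2 + g q.1 q.2 * pdv f i q.1 q.2 := by
  rw [pdv_eq_of_hasFDerivAt (f := fun t x => f t x * g t x)
    (hf.hasFDerivAt.mul hg.hasFDerivAt), pdv_eq_of_hasFDerivAt hf.hasFDerivAt,
    pdv_eq_of_hasFDerivAt hg.hasFDerivAt]
  rfl

theorem tdv_add_divg_mul {ρ : ℝ → (Fin n → ℝ) → ℝ} (hρ : DifferentiableAt ℝ (uncurry ρ) q)
    (hu : DifferentiableAt ℝ (uncurry u) q) :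
    tdv ρ q.1 q.2 + divg (fun t x i => ρ t x * u t x i) q.1 q.2 =
      matD u ρ q.1 q.2 + ρ q.1 q.2 * divg u q.1 q.2 := by
  have hui : ∀ i, DifferentiableAt ℝ (uncurry fun t x => u t x i) q := differentiableAt_pi.1 hu
  simp only [matD, divg, pdv_mul hρ (hui _), Finset.sum_add_distrib, Finset.mul_sum]
  ring

theorem matD_log_eq_neg_divg {ρ : ℝ → (Fin n → ℝ) → ℝ} (hρ : DifferentiableAt ℝ (uncurry ρ) q)
    (hu : DifferentiableAt ℝ (uncurry u) q) (hρ0 : ρ q.1 q.2 ≠ 0)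
    (hcont : tdv ρ q.1 q.2 + divg (fun t x i => ρ t x * u t x i) q.1 q.2 = 0) :
    matD u (fun t x => log (ρ t x)) q.1 q.2 = -divg u q.1 q.2 := by
  rw [tdv_add_divg_mul hρ hu] at hcont
  rw [matD_comp (differentiableAt_log hρ0) hρ, deriv_log, eq_neg_iff_add_eq_zero]
  field_simp
  linear_combination hcont

theorem hasFDerivAt_uncurry_pdv (hg : ContDiffAt ℝ 2 (uncurry g) q) (i : Fin n) :
    HasFDerivAt (uncurry (pdv g i))
      ((fderiv ℝ (fderiv ℝ (uncurry g)) q).flip (0, Pi.single i 1)) q := by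
  have hG : ∀ᶠ z in 𝓝 q, DifferentiableAt ℝ (uncurry g) z :=
    (hg.eventually (by simp)).mono fun z hz => hz.differentiableAt (by simp)
  have hG' := ((hg.fderiv_right (m := 1) le_rfl).differentiableAt one_ne_zero).hasFDerivAt
  refine ((hG'.clm_apply (hasFDerivAt_const ((0 : ℝ), Pi.single i (1 : ℝ)) q)).congr_fderiv
    (by simp)).congr_of_eventuallyEq ?_
  filter_upwards [hG] with z hz
  exact pdv_eq_of_hasFDerivAt hz.hasFDerivAt i

theorem hasFDerivAt_uncurry_matD (hg : ContDiffAt ℝ 2 (uncurry g) q)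
    (hu : DifferentiableAt ℝ (uncurry u) q) :
    HasFDerivAt (uncurry (matD u g))
      ((fderiv ℝ (uncurry g) q).comp ((0 : (ℝ × (Fin n → ℝ)) →L[ℝ] ℝ).prod (fderiv ℝ (uncurry u) q))
        + (fderiv ℝ (fderiv ℝ (uncurry g)) q).flip (1, uncurry u q)) q := by
  have hG : ∀ᶠ z in 𝓝 q, DifferentiableAt ℝ (uncurry g) z :=
    (hg.eventually (by simp)).mono fun z hz => hz.differentiableAt (by simp)
  have hG' := ((hg.fderiv_right (m := 1) le_rfl).differentiableAt one_ne_zero).hasFDerivAt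
  refine (hG'.clm_apply ((hasFDerivAt_const 1 q).prodMk hu.hasFDerivAt)).congr_of_eventuallyEq ?_
  filter_upwards [hG] with z hz
  exact matD_eq_of_hasFDerivAt hz.hasFDerivAt

-- Symmetry of the second derivative of `g` lets `∂ᵢ` pass through differentiation along `(1, u)`.
theorem pdv_matD (hg : ContDiffAt ℝ 2 (uncurry g) q) (hu : DifferentiableAt ℝ (uncurry u) q)
    (i : Fin n) : pdv (matD u g) i q.1 q.2 =
      matD u (pdv g i) q.1 q.2 + ∑ j, pdv (fun t x => u t x j) i q.1 q.2 * pdv g j q.1 q.2 := by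
  have hgj (j : Fin n) := pdv_eq_of_hasFDerivAt (hg.differentiableAt (by simp)).hasFDerivAt j
  have huj (j : Fin n) :=
    pdv_eq_of_hasFDerivAt (f := fun t x => u t x j) (hasFDerivAt_pi'.1 hu.hasFDerivAt j) i
  rw [pdv_eq_of_hasFDerivAt (hasFDerivAt_uncurry_matD hg hu),
    matD_eq_of_hasFDerivAt (hasFDerivAt_uncurry_pdv hg i)]
  simp only [add_apply, ContinuousLinearMap.comp_apply, ContinuousLinearMap.prod_apply,
    zero_apply, ContinuousLinearMap.flip_apply, hg.isSymmSndFDerivAt (by simp) (0, _), hgj, huj]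
  rw [ContinuousLinearMap.apply_prod_eq _ 0, zero_mul, zero_add, add_comm]
  rfl

end MaterialDerivative

/-- for a barotropic compressible fluid, `f = log ρ` satisfies the
convected wave equation `f̈ = div(p'(ρ)(1/ρ)∇ρ) + Σᵢⱼ ∂ⱼuⁱ ∂ᵢuʲ`. -/
theorem convected_wave_equation {n : ℕ} (U : Set (ℝ × (Fin n → ℝ))) (hU : IsOpen U)
    (ρ : ℝ → (Fin n → ℝ) → ℝ) (u : ℝ → (Fin n → ℝ) → Fin n → ℝ) (p : ℝ → ℝ)
    (hρ : ContDiffOn ℝ (⊤ : ℕ∞) (fun q : ℝ × (Fin n → ℝ) => ρ q.1 q.2) U)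
    (hu : ContDiffOn ℝ (⊤ : ℕ∞) (fun q : ℝ × (Fin n → ℝ) => u q.1 q.2) U)
    (hp : ContDiff ℝ (⊤ : ℕ∞) p)
    (hpos : ∀ q ∈ U, 0 < ρ q.1 q.2)
    (heuler : ∀ q ∈ U, ∀ i, matD u (fun t x => u t x i) q.1 q.2 =
      -(1 / ρ q.1 q.2) * pdv (fun t x => p (ρ t x)) i q.1 q.2)
    (hcont : ∀ q ∈ U, tdv ρ q.1 q.2 + divg (fun t x i => ρ t x * u t x i) q.1 q.2 = 0) :
    ∀ q ∈ U, matD u (matD u (fun t x => Real.log (ρ t x))) q.1 q.2 =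
      divg (fun t x i => deriv p (ρ t x) * (1 / ρ t x) * pdv ρ i t x) q.1 q.2 +
        ∑ i, ∑ j, pdv (fun t x => u t x i) j q.1 q.2 * pdv (fun t x => u t x j) i q.1 q.2 := by
  intro q hq
  have hρd : ∀ z ∈ U, DifferentiableAt ℝ (uncurry ρ) z := fun z hz =>
    (hρ.contDiffAt (hU.mem_nhds hz)).differentiableAt (by simp)
  have hu2 : ∀ z ∈ U, ContDiffAt ℝ 2 (uncurry u) z := fun z hz =>
    (hu.contDiffAt (hU.mem_nhds hz)).of_le (WithTop.coe_le_coe.2 le_top)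
  have hui (i : Fin n) : ContDiffAt ℝ 2 (uncurry fun t x => u t x i) q :=
    contDiffAt_pi.1 (hu2 q hq) i
  have hfdot : uncurry (matD u fun t x => log (ρ t x)) =ᶠ[𝓝 q] uncurry fun t x => -divg u t x := by
    filter_upwards [hU.mem_nhds hq] with z hz
    exact matD_log_eq_neg_divg (hρd z hz) ((hu2 z hz).differentiableAt (by simp)) (hpos z hz).ne'
      (hcont z hz)
  have hK (i : Fin n) : uncurry (fun t x => deriv p (ρ t x) * (1 / ρ t x) * pdv ρ i t x)
      =ᶠ[𝓝 q] uncurry fun t x => -matD u (fun t x => u t x i) t x := by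
    filter_upwards [hU.mem_nhds hq] with z hz
    simp only [uncurry_def, heuler z hz i, pdv_comp (hp.differentiable (by simp) _) (hρd z hz)]
    ring
  calc matD u (matD u fun t x => log (ρ t x)) q.1 q.2
      = -∑ i, matD u (pdv (fun t x => u t x i) i) q.1 q.2 := by
        rw [matD_congr hfdot, matD_neg]
        unfold divg
        rw [matD_sum fun i _ => (hasFDerivAt_uncurry_pdv (hui i) i).differentiableAt]
    _ = _ := by
        simp only [divg, pdv_congr (hK _), pdv_neg,
          pdv_matD (hui _) ((hu2 q hq).differentiableAt (by simp))]
        simp only [neg_add, Finset.sum_add_distrib, Finset.sum_neg_distrib, mul_comm]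
        ring
end

section
/- In the setting of Burgers' equation with u(t) = u₀^λ ∘ (ζ^λ(t))⁻¹, ζ^λ(t)(x) = x + t u₀^λ(x), suppose λ ↦ u₀^λ is differentiable at λ = 0 with derivative z₀, and write u = u⁰, ζ = ζ⁰, z(t) = ∂_λ u^λ(t)|_{λ=0}. Then z satisfies, along the flow, z(t)(ζ(t)(x)) = z₀(x) / (1 + t·∂ₓu₀(x)). -/
/-!
For `λ` near `0` the data `u₀^λ` are bounded uniformly in `x` (periodicity plus compactness), so
`ζ^λ(t) = id + t u₀^λ` is onto and `φ λ := u^λ(t)(ζ(t)(x))` solves the implicit equation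
`φ λ = u₀^λ (ζ(t)(x) - t φ λ)`; without surjectivity `Function.invFun` would return junk values.
Since `ζ(t)` is strictly increasing, `φ 0 = u₀ x`, and differentiating the implicit equation at
`λ = 0` gives `z = z₀ - t ∂ₓu₀(x) z`.
-/

open Filter Function Set Topology

section PartialDerivatives

variable {F : ℝ × ℝ → ℝ} {L : ℝ × ℝ →L[ℝ] ℝ}

theorem HasFDerivAt.hasDerivAt_comp_graph {a : ℝ} {g : ℝ → ℝ} {g' : ℝ}
    (hF : HasFDerivAt F L (a, g a)) (hg : HasDerivAt g g' a) :
    HasDerivAt (fun s => F (s, g s)) (L (1, 0) + g' * L (0, 1)) a := by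
  have hL : L (1, g') = L (1, 0) + g' * L (0, 1) := by
    rw [← smul_eq_mul, ← map_smul, ← map_add, Prod.smul_mk, Prod.mk_add_mk]
    simp
  rw [← hL]
  exact hF.comp_hasDerivAt a ((hasDerivAt_id a).prodMk hg)

theorem HasFDerivAt.hasDerivAt_fst_slice {a b : ℝ} (hF : HasFDerivAt F L (a, b)) :
    HasDerivAt (fun s => F (s, b)) (L (1, 0)) a := by
  simpa using hF.hasDerivAt_comp_graph (hasDerivAt_const a b)

theorem HasFDerivAt.hasDerivAt_snd_slice {a b : ℝ} (hF : HasFDerivAt F L (a, b)) :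
    HasDerivAt (fun y => F (a, y)) (L (0, 1)) b :=
  hF.comp_hasDerivAt b ((hasDerivAt_const b a).prodMk (hasDerivAt_id b))

theorem HasDerivAt.eq_div_of_eventuallyEq_comp_graph {φ : ℝ → ℝ} {a c t z : ℝ}
    (hF : HasFDerivAt F L (a, c - t * φ a)) (hφ : HasDerivAt φ z a)
    (himpl : φ =ᶠ[𝓝 a] fun s => F (s, c - t * φ s)) (hne : 1 + t * L (0, 1) ≠ 0) :
    z = L (1, 0) / (1 + t * L (0, 1)) := by
  have hcomp := hF.hasDerivAt_comp_graph ((hφ.const_mul t).const_sub c)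
  have hz : z = L (1, 0) + -(t * z) * L (0, 1) := hφ.unique (hcomp.congr_of_eventuallyEq himpl)
  rw [eq_div_iff hne]
  linarith

end PartialDerivatives

theorem exists_abs_le_of_continuous_of_periodic {F : ℝ × ℝ → ℝ} (hF : Continuous F) {c : ℝ}
    (hc : 0 < c) (hper : ∀ a, Periodic (fun y => F (a, y)) c) {K : Set ℝ} (hK : IsCompact K) :
    ∃ M, ∀ a ∈ K, ∀ y, |F (a, y)| ≤ M := by
  obtain ⟨M, hM⟩ := (hK.prod isCompact_Icc).exists_bound_of_continuousOn
    (s := K ×ˢ Icc 0 c) hF.continuousOn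
  refine ⟨M, fun a ha y => ?_⟩
  obtain ⟨y', hy', hyy'⟩ := (hper a).exists_mem_Ico₀ hc y
  simpa only [hyy', Real.norm_eq_abs] using hM (a, y') ⟨ha, Ico_subset_Icc_self hy'⟩

theorem surjective_id_add_of_abs_le {g : ℝ → ℝ} (hg : Continuous g) {M : ℝ}
    (hM : ∀ y, |g y| ≤ M) : Surjective fun y => y + g y :=
  (continuous_id.add hg).surjective
    (tendsto_atTop_add_right_of_le _ (-M) tendsto_id fun y => neg_le_of_abs_le (hM y))
    (tendsto_atBot_add_right_of_ge _ M tendsto_id fun y => le_of_abs_le (hM y))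

theorem strictMono_id_add_mul {f : ℝ → ℝ} (hf : Differentiable ℝ f) {t : ℝ}
    (hpos : ∀ x, 0 < 1 + t * deriv f x) : StrictMono fun y => y + t * f y :=
  strictMono_of_hasDerivAt_pos (fun x => (hasDerivAt_id x).add ((hf x).hasDerivAt.const_mul t))
    hpos

theorem apply_invFun_id_add_mul {f : ℝ → ℝ} {t : ℝ} (hsurj : Surjective fun y => y + t * f y)
    (x : ℝ) : f (invFun (fun y => y + t * f y) x)
      = f (x - t * f (invFun (fun y => y + t * f y) x)) := by
  set w := invFun (fun y => y + t * f y) x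
  have hw : w + t * f w = x := invFun_eq (hsurj x)
  rw [← hw, add_sub_cancel_right]

/-- for a C¹ family of Burgers initial data `u₀^λ` with
`∂_λ u₀^λ|₀ = z₀`, and `u^λ(t) = u₀^λ ∘ (ζ^λ(t))⁻¹` with `ζ^λ(t)(x) = x + t u₀^λ(x)`,
the derivative `z(t) = ∂_λ u^λ(t)|₀` satisfies, along the flow of `u = u⁰`,
`z(t)(ζ(t)(x)) = z₀(x)/(1 + t·∂ₓu₀(x))`. -/
theorem burgers_derivative_in_initial_data (U0 : ℝ → ℝ → ℝ) (z₀ : ℝ → ℝ)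
    (z : ℝ → ℝ → ℝ) (t : ℝ)
    (hU0 : ContDiff ℝ 2 (fun q : ℝ × ℝ => U0 q.1 q.2))
    (hper : ∀ lam : ℝ, Function.Periodic (U0 lam) 1)
    (hz₀ : ∀ x : ℝ, HasDerivAt (fun lam => U0 lam x) (z₀ x) 0)
    (hz : ∀ s x : ℝ, HasDerivAt
      (fun lam => U0 lam (Function.invFun (fun y => y + s * U0 lam y) x)) (z s x) 0)
    (hpos : ∀ x : ℝ, 0 < 1 + t * deriv (U0 0) x) :
    ∀ x : ℝ, z t (x + t * U0 0 x) = z₀ x / (1 + t * deriv (U0 0) x) := by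
  intro x
  set F : ℝ × ℝ → ℝ := fun q => U0 q.1 q.2
  have hF : Differentiable ℝ F := hU0.differentiable (by norm_num)
  have hslice (lam y : ℝ) : HasDerivAt (U0 lam) (fderiv ℝ F (lam, y) (0, 1)) y :=
    (hF (lam, y)).hasFDerivAt.hasDerivAt_snd_slice
  obtain ⟨M, hM⟩ := exists_abs_le_of_continuous_of_periodic hF.continuous one_pos hper
    (isCompact_Icc (a := -1) (b := 1))
  have hsurj : ∀ lam ∈ Icc (-1 : ℝ) 1, Surjective fun y => y + t * U0 lam y := fun lam hlam =>
    surjective_id_add_of_abs_le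
      (continuous_const.mul (continuous_iff_continuousAt.2 fun y => (hslice lam y).continuousAt))
      (fun y => by rw [abs_mul]; exact mul_le_mul_of_nonneg_left (hM lam hlam y) (abs_nonneg t))
  have himpl := eventually_of_mem (Icc_mem_nhds neg_one_lt_zero one_pos)
    fun lam hlam => apply_invFun_id_add_mul (hsurj lam hlam) (x + t * U0 0 x)
  have hinv : invFun (fun y => y + t * U0 0 y) (x + t * U0 0 x) = x :=
    leftInverse_invFun
      (strictMono_id_add_mul (fun y => (hslice 0 y).differentiableAt) hpos).injective x
  have hL : HasFDerivAt F (fderiv ℝ F (0, x)) (0, x) := (hF (0, x)).hasFDerivAt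
  have hne := (hpos x).ne'
  rw [(hslice 0 x).deriv] at hne ⊢
  rw [← hL.hasDerivAt_fst_slice.unique (hz₀ x)]
  refine (hz t _).eq_div_of_eventuallyEq_comp_graph (F := F) ?_ himpl hne
  rwa [hinv, add_sub_cancel_right]
end
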